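/- Let $Q \subseteq \mathbb{R}^d$ be a cube and $f \in L^1(Q)$. Then for almost every $x \in Q$, $|f(x) - \langle f\rangle_Q| \le C_d \sum_{R \in \mathcal{D}(Q)} \langle |f - \langle f\rangle_R| \rangle_R\, \mathbf{1}_R(x)$, where $C_d$ depends only on the dimension $d$ (one may take $C_d = 2^d$). -/

import Mathlib

open MeasureTheory
open scoped ENNReal NNReal

noncomputable section

abbrev Euc (d : ℕ) := EuclideanSpace ℝ (Fin d)

structure Cube (d : ℕ) where
  center : Euc d
  side : ℝ
  side_pos : 0 < side

namespace Cube

variable {d : ℕ}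

/-- A (half-open) axis-parallel cube in `ℝ^d`. -/
def toSet (Q : Cube d) : Set (Euc d) :=
  {x | ∀ i, Q.center i - Q.side / 2 ≤ x i ∧ x i < Q.center i + Q.side / 2}

/-- The volume `|Q| = ℓ(Q)^d` of a cube. -/
def vol (Q : Cube d) : ℝ := Q.side ^ d

/-- The average `⟨f⟩_Q = |Q|⁻¹ ∫_Q f`. -/
def avg (Q : Cube d) (f : Euc d → ℝ) : ℝ := Q.vol⁻¹ * ∫ x in Q.toSet, f x

/-- The `ℝ≥0∞`-valued average of a nonnegative function. -/
def elavg (Q : Cube d) (g : Euc d → ℝ≥0∞) : ℝ≥0∞ :=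
  (∫⁻ x in Q.toSet, g x) / ENNReal.ofReal Q.vol

/-- The `L^t`-average `⟨f⟩_{t,Q} = (|Q|⁻¹ ∫_Q |f|^t)^{1/t}`, with the
essential supremum when `t = ∞`. -/
def lavg (Q : Cube d) (t : ℝ≥0∞) (f : Euc d → ℝ) : ℝ≥0∞ :=
  if t = ⊤ then essSup (fun x => ENNReal.ofReal |f x|) (volume.restrict Q.toSet)
  else ((∫⁻ x in Q.toSet, ENNReal.ofReal |f x| ^ t.toReal) / ENNReal.ofReal Q.vol) ^ (1 / t.toReal)

/-- The concentric dilation `γ Q` of a cube (only intended for `γ ≥ 1`). -/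
def scale (γ : ℝ) (Q : Cube d) : Cube d :=
  ⟨Q.center, max γ 1 * Q.side,
    mul_pos (lt_of_lt_of_le one_pos (le_max_right γ 1)) Q.side_pos⟩

/-- The dyadic subcube of `Q` of generation `j` with index `k`. -/
def dyadicSub (Q : Cube d) (j : ℕ) (k : Fin d → ℕ) : Cube d where
  center := WithLp.toLp 2 fun i => Q.center i - Q.side / 2 + ((k i : ℝ) + 1 / 2) * (Q.side / 2 ^ j)
  side := Q.side / 2 ^ j
  side_pos := div_pos Q.side_pos (by positivity)

/-- The `2ℓ(Q)`-periodic even reflection map: `reflect Q x ∈ Q` and functions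
defined on `Q` are extended outside `Q` by precomposing with `reflect Q`. -/
def reflect (Q : Cube d) (x : Euc d) : Euc d := WithLp.toLp 2 fun i =>
  (Q.center i - Q.side / 2) + Q.side -
    |(x i - (Q.center i - Q.side / 2) -
        2 * Q.side * ((⌊(x i - (Q.center i - Q.side / 2)) / (2 * Q.side)⌋ : ℤ) : ℝ)) - Q.side|

end Cube

/-- `R` is a dyadic subcube of `Q`. -/
def IsDyadicSub {d : ℕ} (Q R : Cube d) : Prop :=
  ∃ (j : ℕ) (k : Fin d → ℕ), (∀ i, k i < 2 ^ j) ∧ R = Q.dyadicSub j k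

/-- A collection of cubes is sparse if each `R` carries a subset `E R ⊆ R`
with `|E R| ≥ |R|/2`, the sets `E R` being pairwise disjoint. -/
def IsSparse {d : ℕ} (𝒮 : Set (Cube d)) : Prop :=
  ∃ E : Cube d → Set (Euc d),
    (∀ R ∈ 𝒮, MeasurableSet (E R) ∧ E R ⊆ R.toSet ∧
      ENNReal.ofReal R.vol ≤ 2 * volume (E R)) ∧
    𝒮.Pairwise fun R R' => Disjoint (E R) (E R')

/-- The Hölder conjugate `p'` of `p`, as an extended real exponent. -/
def conjE (p : ℝ) : ℝ≥0∞ := if p = 1 then ⊤ else ENNReal.ofReal (p / (p - 1))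

/-- The two-weight Muckenhoupt characteristic
`[ω,σ]_{A^α_{p,q}(Q)} = sup_{R ⊆ Q} |R|^α ⟨ω⟩_{q,R} ⟨σ⁻¹⟩_{p',R}`. -/
def muck {d : ℕ} (Q : Cube d) (p q α : ℝ) (ω σ : Euc d → ℝ) : ℝ≥0∞ :=
  ⨆ R : {R : Cube d // R.toSet ⊆ Q.toSet},
    ENNReal.ofReal (R.1.vol ^ α) * R.1.lavg (ENNReal.ofReal q) ω *
      R.1.lavg (conjE p) fun x => (σ x)⁻¹

/-- The classical Muckenhoupt `A_p` characteristic
`[w]_{A_p} = sup_Q ⟨w⟩_{1,Q} ⟨w⁻¹⟩_{1/(p-1),Q}` over all cubes in `ℝ^d`. -/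
def apChar (d : ℕ) (p : ℝ) (w : Euc d → ℝ) : ℝ≥0∞ :=
  ⨆ R : Cube d,
    R.lavg 1 w * R.lavg (if p = 1 then ⊤ else ENNReal.ofReal (1 / (p - 1))) fun x => (w x)⁻¹

/-- The localized maximal function `M(w 1_R)(x) = sup_{S ⊆ R, x ∈ S} ⟨w⟩_{1,S}`. -/
def locMaxFn {d : ℕ} (R : Cube d) (w : Euc d → ℝ) (x : Euc d) : ℝ≥0∞ :=
  ⨆ S : {S : Cube d // S.toSet ⊆ R.toSet ∧ x ∈ S.toSet}, S.1.lavg 1 w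

/-- The local Fujii–Wilson `A_∞(Q)` characteristic. -/
def ainf {d : ℕ} (Q : Cube d) (w : Euc d → ℝ) : ℝ≥0∞ :=
  ⨆ R : {R : Cube d // R.toSet ⊆ Q.toSet},
    (∫⁻ x in R.1.toSet, locMaxFn R.1 w x) / ∫⁻ x in R.1.toSet, ENNReal.ofReal (w x)

/-- The weighted norm `‖g‖_{L^p_σ(A)} = (∫_A |g|^p σ^p)^{1/p}` (weight as multiplier). -/
def wLp {d : ℕ} (A : Set (Euc d)) (p : ℝ) (σ g : Euc d → ℝ) : ℝ≥0∞ :=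
  (∫⁻ x in A, ENNReal.ofReal (|g x| * σ x) ^ p) ^ (1 / p)

/-- The fractional difference quotient
`f^{s,r}_A(x) = (∫_A |f(x)-f(y)|^r / |x-y|^{d+sr} dy)^{1/r}`. -/
def fsr {d : ℕ} (A : Set (Euc d)) (s r : ℝ) (f : Euc d → ℝ) (x : Euc d) : ℝ≥0∞ :=
  (∫⁻ y in A, ENNReal.ofReal |f x - f y| ^ r / edist x y ^ ((d : ℝ) + s * r)) ^ (1 / r)

/-- `f^{s,r}_{3R}`, where `f` is extended outside `Q` by periodic reflection. -/
def fsr3 {d : ℕ} (Q : Cube d) (s r : ℝ) (f : Euc d → ℝ) (R : Cube d) (x : Euc d) : ℝ≥0∞ :=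
  fsr (Cube.scale 3 R).toSet s r (fun y => f (Q.reflect y)) x

/-- The weighted weak norm `‖g‖_{L^{q,∞}_ω(Q)}` of an `ℝ≥0∞`-valued function. -/
def weakNE {d : ℕ} (Q : Cube d) (q : ℝ) (ω : Euc d → ℝ) (g : Euc d → ℝ≥0∞) : ℝ≥0∞ :=
  ⨆ lam : ℝ≥0, (lam : ℝ≥0∞) *
    (∫⁻ x in Q.toSet ∩ {x | (lam : ℝ≥0∞) < g x}, ENNReal.ofReal (ω x) ^ q) ^ (1 / q)

/-- The weighted weak norm `‖g‖_{L^{q,∞}_ω(Q)}` of a real valued function. -/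
def weakN {d : ℕ} (Q : Cube d) (q : ℝ) (ω g : Euc d → ℝ) : ℝ≥0∞ :=
  weakNE Q q ω fun x => ENNReal.ofReal |g x|

/-- The weighted Triebel–Lizorkin seminorm `[u]_{F^{s,σ}_{p,r}(Q)}`. -/
def fSemi {d : ℕ} (Q : Cube d) (p r s : ℝ) (σ u : Euc d → ℝ) : ℝ≥0∞ :=
  (∫⁻ x in Q.toSet, fsr Q.toSet s r u x ^ p * ENNReal.ofReal (σ x) ^ p) ^ (1 / p)

/-!
Let `Q_j(x)` be the generation-`j` dyadic subcube of `Q` containing `x`. Since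
`Q_{j+1}(x) ⊆ Q_j(x)` and `|Q_j(x)| = 2^d |Q_{j+1}(x)|`, Jensen's inequality gives
`|⟨f⟩_{Q_{j+1}(x)} - ⟨f⟩_{Q_j(x)}| ≤ 2^d ⟨|f - ⟨f⟩_{Q_j(x)}|⟩_{Q_j(x)}`, and telescoping over
`j < N` bounds `|⟨f⟩_{Q_N(x)} - ⟨f⟩_Q|`. Each `Q_j(x)` lies in a ball around `x` of comparable
volume, so by Lebesgue's differentiation theorem `⟨|f - f(x)|⟩_{Q_N(x)} → 0` for almost every `x`,
and the bound passes to the limit.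
-/

open Set Metric Filter Topology

lemma MeasureTheory.setLIntegral_div_le_mul_div {α : Type*} [MeasurableSpace α] {μ : Measure α}
    {s t : Set α} (hst : s ⊆ t) (ht₀ : μ t ≠ 0) (ht : μ t ≠ ∞) (g : α → ℝ≥0∞) (c : ℝ≥0∞) :
    (∫⁻ x in s, g x ∂μ) / c ≤ μ t / c * ((∫⁻ x in t, g x ∂μ) / μ t) :=
  calc (∫⁻ x in s, g x ∂μ) / c ≤ (∫⁻ x in t, g x ∂μ) / c := by gcongr
    _ = μ t / c * ((∫⁻ x in t, g x ∂μ) / μ t) := by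
      rw [mul_comm, ← mul_div_assoc, ENNReal.div_mul_cancel ht₀ ht]

namespace Cube

variable {d : ℕ}

lemma vol_pos (R : Cube d) : 0 < R.vol := pow_pos R.side_pos d

lemma toSet_eq_preimage_pi (R : Cube d) :
    R.toSet = (MeasurableEquiv.toLp 2 (Fin d → ℝ)).symm ⁻¹'
      univ.pi fun i => Ico (R.center i - R.side / 2) (R.center i + R.side / 2) := by
  ext x
  simp [toSet, MeasurableEquiv.coe_toLp_symm]

lemma measurableSet_toSet (R : Cube d) : MeasurableSet R.toSet := by
  rw [toSet_eq_preimage_pi]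
  exact (MeasurableSet.univ_pi fun _ => measurableSet_Ico).preimage (MeasurableEquiv.measurable _)

lemma volume_toSet (R : Cube d) : volume R.toSet = ENNReal.ofReal R.vol := by
  rw [toSet_eq_preimage_pi, (EuclideanSpace.volume_preserving_symm_measurableEquiv_toLp
    (Fin d)).measure_preimage (MeasurableSet.univ_pi fun _ => measurableSet_Ico).nullMeasurableSet,
    volume_pi_pi]
  simp [Real.volume_Ico, vol, ENNReal.ofReal_pow R.side_pos.le]

lemma toSet_subset_closedBall {R : Cube d} {x : Euc d} (hx : x ∈ R.toSet) :
    R.toSet ⊆ closedBall x (R.side * Real.sqrt d) := by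
  intro y hy
  have hcoord : ∀ i, dist (y i) (x i) ^ 2 ≤ R.side ^ 2 := fun i => by
    have hxi := hx i
    have hyi := hy i
    rw [Real.dist_eq, sq_abs]
    nlinarith
  rw [mem_closedBall, EuclideanSpace.dist_eq,
    Real.sqrt_le_left (mul_nonneg R.side_pos.le (Real.sqrt_nonneg _))]
  calc ∑ i, dist (y i) (x i) ^ 2 ≤ ∑ _i : Fin d, R.side ^ 2 :=
        Finset.sum_le_sum fun i _ => hcoord i
    _ = (R.side * Real.sqrt d) ^ 2 := by simp [mul_pow, mul_comm]

lemma elavg_le_mul_lintegral_closedBall_div {R : Cube d} {x : Euc d} (hx : x ∈ R.toSet)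
    (g : Euc d → ℝ≥0∞) :
    R.elavg g ≤ ENNReal.ofReal ((Real.sqrt d + 1) ^ d) * volume (ball (0 : Euc d) 1) *
      ((∫⁻ y in closedBall x (R.side * (Real.sqrt d + 1)), g y) /
        volume (closedBall x (R.side * (Real.sqrt d + 1)))) := by
  set B := closedBall x (R.side * (Real.sqrt d + 1))
  have hr : 0 < R.side * (Real.sqrt d + 1) := mul_pos R.side_pos (by positivity)
  have hRB : R.toSet ⊆ B := (toSet_subset_closedBall hx).trans
    (closedBall_subset_closedBall (mul_le_mul_of_nonneg_left (by linarith) R.side_pos.le))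
  have hvolB : volume B = ENNReal.ofReal R.vol *
      (ENNReal.ofReal ((Real.sqrt d + 1) ^ d) * volume (ball (0 : Euc d) 1)) := by
    rw [Measure.addHaar_closedBall volume x hr.le, finrank_euclideanSpace_fin, mul_pow,
      ENNReal.ofReal_mul (pow_nonneg R.side_pos.le d), mul_assoc]
    rfl
  calc R.elavg g ≤ volume B / ENNReal.ofReal R.vol * ((∫⁻ y in B, g y) / volume B) :=
      setLIntegral_div_le_mul_div hRB (measure_closedBall_pos volume x hr).ne'
        measure_closedBall_lt_top.ne _ _
    _ = _ := by
      rw [hvolB, mul_comm (ENNReal.ofReal R.vol),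
        ENNReal.mul_div_cancel_right (by simp [R.vol_pos]) ENNReal.ofReal_ne_top]

lemma ofReal_abs_avg_le_elavg (R : Cube d) (h : Euc d → ℝ) :
    ENNReal.ofReal |R.avg h| ≤ R.elavg fun y => ENNReal.ofReal |h y| := by
  rw [avg, abs_mul, abs_inv, abs_of_pos R.vol_pos, ENNReal.ofReal_mul (inv_nonneg.2 R.vol_pos.le),
    ENNReal.ofReal_inv_of_pos R.vol_pos, elavg, div_eq_mul_inv, mul_comm]
  gcongr
  simpa only [Real.enorm_eq_ofReal_abs] using enorm_integral_le_lintegral_enorm h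

lemma ofReal_abs_avg_sub_le_elavg {R : Cube d} {f : Euc d → ℝ} (hf : IntegrableOn f R.toSet)
    (c : ℝ) : ENNReal.ofReal |R.avg f - c| ≤ R.elavg fun y => ENNReal.ofReal |f y - c| := by
  have hc : IntegrableOn (fun _ => c) R.toSet := integrableOn_const (by simp [volume_toSet])
  have havg : R.avg (fun y => f y - c) = R.avg f - c := by
    rw [avg, avg, integral_sub hf hc, setIntegral_const, measureReal_def, volume_toSet,
      ENNReal.toReal_ofReal R.vol_pos.le, smul_eq_mul, mul_sub, ← mul_assoc,
      inv_mul_cancel₀ R.vol_pos.ne', one_mul]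
  rw [← havg]
  exact R.ofReal_abs_avg_le_elavg _

def meanOsc (R : Cube d) (f : Euc d → ℝ) : ℝ≥0∞ :=
  R.elavg fun y => ENNReal.ofReal |f y - R.avg f|

lemma ofReal_abs_avg_sub_avg_le {R R' : Cube d} {f : Euc d → ℝ} (hsub : R'.toSet ⊆ R.toSet)
    (hf : IntegrableOn f R.toSet) :
    ENNReal.ofReal |R'.avg f - R.avg f| ≤
      ENNReal.ofReal R.vol / ENNReal.ofReal R'.vol * R.meanOsc f :=
  calc ENNReal.ofReal |R'.avg f - R.avg f|
      ≤ R'.elavg fun y => ENNReal.ofReal |f y - R.avg f| :=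
        ofReal_abs_avg_sub_le_elavg (hf.mono_set hsub) _
    _ ≤ _ := by
      rw [meanOsc, elavg, elavg, ← volume_toSet R]
      exact setLIntegral_div_le_mul_div hsub (by simp [volume_toSet, R.vol_pos])
        (by simp [volume_toSet]) _ _

def dyadicCoord (Q : Cube d) (j : ℕ) (x : Euc d) (i : Fin d) : ℝ :=
  (x i - (Q.center i - Q.side / 2)) / (Q.side / 2 ^ j)

lemma mem_dyadicSub_iff {Q : Cube d} {j : ℕ} {k : Fin d → ℕ} {x : Euc d} :
    x ∈ (Q.dyadicSub j k).toSet ↔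
      ∀ i, (k i : ℝ) ≤ Q.dyadicCoord j x i ∧ Q.dyadicCoord j x i < k i + 1 := by
  have hh : 0 < Q.side / 2 ^ j := div_pos Q.side_pos (by positivity)
  simp only [toSet, dyadicSub, dyadicCoord, PiLp.toLp_apply, Set.mem_ofPred_eq,
    le_div_iff₀ hh, div_lt_iff₀ hh]
  refine forall_congr' fun i => and_congr ?_ ?_ <;> constructor <;> intro h <;> linarith

lemma dyadicSub_zero (Q : Cube d) : Q.dyadicSub 0 (fun _ => 0) = Q := by
  obtain ⟨c, s, hs⟩ := Q
  simp only [dyadicSub, pow_zero, div_one, CharP.cast_eq_zero, zero_add, mk.injEq, and_true]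
  ext i
  ring

lemma dyadicCoord_succ (Q : Cube d) (j : ℕ) (x : Euc d) (i : Fin d) :
    Q.dyadicCoord (j + 1) x i = 2 * Q.dyadicCoord j x i := by
  simp only [dyadicCoord, pow_succ]
  field_simp

lemma dyadicSub_succ_subset (Q : Cube d) (j : ℕ) (k : Fin d → ℕ) :
    (Q.dyadicSub (j + 1) k).toSet ⊆ (Q.dyadicSub j fun i => k i / 2).toSet := by
  intro y hy
  rw [mem_dyadicSub_iff] at hy ⊢
  intro i
  obtain ⟨hlo, hhi⟩ := hy i
  rw [dyadicCoord_succ] at hlo hhi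
  have hdiv_lo : (2 * (k i / 2 : ℕ) : ℝ) ≤ k i := by exact_mod_cast Nat.mul_div_le (k i) 2
  have hdiv_hi : (k i + 1 : ℝ) ≤ 2 * (k i / 2 : ℕ) + 2 := by exact_mod_cast (by omega)
  constructor <;> linarith

lemma vol_dyadicSub_eq_mul_vol_succ (Q : Cube d) (j : ℕ) (k k' : Fin d → ℕ) :
    (Q.dyadicSub j k).vol = 2 ^ d * (Q.dyadicSub (j + 1) k').vol := by
  simp only [vol, dyadicSub, pow_succ, div_pow, mul_pow]
  field_simp

section dyadicCube

variable {Q : Cube d} {x : Euc d}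

lemma dyadicCoord_nonneg (hx : x ∈ Q.toSet) (j : ℕ) (i : Fin d) : 0 ≤ Q.dyadicCoord j x i :=
  div_nonneg (by linarith [(hx i).1]) (div_pos Q.side_pos (by positivity)).le

lemma dyadicCoord_lt (hx : x ∈ Q.toSet) (j : ℕ) (i : Fin d) : Q.dyadicCoord j x i < 2 ^ j := by
  rw [dyadicCoord, div_lt_iff₀ (div_pos Q.side_pos (by positivity)),
    mul_div_cancel₀ _ (by positivity)]
  linarith [(hx i).2]

def dyadicIdx (Q : Cube d) (j : ℕ) (x : Euc d) : Fin d → ℕ :=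
  fun i => ⌊Q.dyadicCoord j x i⌋₊

lemma mem_dyadicSub_iff_eq_dyadicIdx (hx : x ∈ Q.toSet) {j : ℕ} {k : Fin d → ℕ} :
    x ∈ (Q.dyadicSub j k).toSet ↔ k = Q.dyadicIdx j x := by
  rw [mem_dyadicSub_iff, funext_iff]
  refine forall_congr' fun i => ?_
  rw [eq_comm, dyadicIdx, Nat.floor_eq_iff (dyadicCoord_nonneg hx j i)]

lemma dyadicIdx_lt (hx : x ∈ Q.toSet) (j : ℕ) (i : Fin d) : Q.dyadicIdx j x i < 2 ^ j :=
  (Nat.floor_lt (dyadicCoord_nonneg hx j i)).2 (by exact_mod_cast dyadicCoord_lt hx j i)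

def dyadicCube (Q : Cube d) (j : ℕ) (x : Euc d) : Cube d := Q.dyadicSub j (Q.dyadicIdx j x)

lemma mem_dyadicCube (hx : x ∈ Q.toSet) (j : ℕ) : x ∈ (Q.dyadicCube j x).toSet :=
  (mem_dyadicSub_iff_eq_dyadicIdx hx).2 rfl

lemma dyadicCube_zero (hx : x ∈ Q.toSet) : Q.dyadicCube 0 x = Q := by
  have hidx : Q.dyadicIdx 0 x = fun _ => 0 :=
    funext fun i => Nat.lt_one_iff.1 (dyadicIdx_lt hx 0 i)
  rw [dyadicCube, hidx, dyadicSub_zero]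

lemma dyadicCube_succ_subset (hx : x ∈ Q.toSet) (j : ℕ) :
    (Q.dyadicCube (j + 1) x).toSet ⊆ (Q.dyadicCube j x).toSet := by
  have hparent := Q.dyadicSub_succ_subset j _ (mem_dyadicCube hx (j + 1))
  rw [mem_dyadicSub_iff_eq_dyadicIdx hx] at hparent
  rw [dyadicCube, dyadicCube, ← hparent]
  exact Q.dyadicSub_succ_subset j _

lemma dyadicCube_subset (hx : x ∈ Q.toSet) (j : ℕ) : (Q.dyadicCube j x).toSet ⊆ Q.toSet := by
  induction j with
  | zero => rw [dyadicCube_zero hx]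
  | succ j ih => exact (dyadicCube_succ_subset hx j).trans ih

variable {f : Euc d → ℝ}

lemma ofReal_abs_avg_dyadicCube_sub_avg_le (hf : IntegrableOn f Q.toSet) (hx : x ∈ Q.toSet)
    (N : ℕ) : ENNReal.ofReal |(Q.dyadicCube N x).avg f - Q.avg f| ≤
      2 ^ d * ∑ j ∈ Finset.range N, (Q.dyadicCube j x).meanOsc f := by
  induction N with
  | zero => simp [dyadicCube_zero hx]
  | succ N ih =>
    have hratio : ENNReal.ofReal (Q.dyadicCube N x).vol /
        ENNReal.ofReal (Q.dyadicCube (N + 1) x).vol = 2 ^ d := by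
      simp only [dyadicCube]
      rw [vol_dyadicSub_eq_mul_vol_succ Q N _ (Q.dyadicIdx (N + 1) x),
        ENNReal.ofReal_mul (by positivity), ENNReal.ofReal_pow zero_le_two, ENNReal.ofReal_ofNat,
        ENNReal.mul_div_cancel_right (by simp [vol_pos]) ENNReal.ofReal_ne_top]
    have hstep := ofReal_abs_avg_sub_avg_le (dyadicCube_succ_subset hx N)
      (hf.mono_set (dyadicCube_subset hx N))
    rw [hratio] at hstep
    calc ENNReal.ofReal |(Q.dyadicCube (N + 1) x).avg f - Q.avg f|
        ≤ ENNReal.ofReal |(Q.dyadicCube (N + 1) x).avg f - (Q.dyadicCube N x).avg f| +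
            ENNReal.ofReal |(Q.dyadicCube N x).avg f - Q.avg f| :=
          (ENNReal.ofReal_le_ofReal (abs_sub_le _ _ _)).trans ENNReal.ofReal_add_le
      _ ≤ 2 ^ d * (Q.dyadicCube N x).meanOsc f +
            2 ^ d * ∑ j ∈ Finset.range N, (Q.dyadicCube j x).meanOsc f := add_le_add hstep ih
      _ = 2 ^ d * ∑ j ∈ Finset.range (N + 1), (Q.dyadicCube j x).meanOsc f := by
          rw [Finset.sum_range_succ, mul_add, add_comm]

lemma meanOsc_dyadicCube_le_sum (hx : x ∈ Q.toSet) (j : ℕ) :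
    (Q.dyadicCube j x).meanOsc f ≤ ∑ k : Fin d → Fin (2 ^ j),
      (Q.dyadicSub j fun i => k i).meanOsc f *
        (Q.dyadicSub j fun i => k i).toSet.indicator (fun _ => 1) x := by
  let k₀ : Fin d → Fin (2 ^ j) := fun i => ⟨Q.dyadicIdx j x i, dyadicIdx_lt hx j i⟩
  have hk₀ : (Q.dyadicSub j fun i => k₀ i) = Q.dyadicCube j x := rfl
  refine le_of_eq_of_le ?_ (Finset.single_le_sum (fun _ _ => zero_le) (Finset.mem_univ k₀))
  rw [hk₀, Set.indicator_of_mem (mem_dyadicCube hx j), mul_one]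

lemma tendsto_elavg_dyadicCube (hf : IntegrableOn f Q.toSet) :
    ∀ᵐ x ∂volume.restrict Q.toSet, Tendsto
      (fun j => (Q.dyadicCube j x).elavg fun y => ENNReal.ofReal |f y - f x|) atTop (𝓝 0) := by
  set g := Q.toSet.indicator f
  have hg : LocallyIntegrable g :=
    (hf.integrable_indicator Q.measurableSet_toSet).locallyIntegrable
  filter_upwards [ae_restrict_mem Q.measurableSet_toSet, ae_restrict_of_ae
    ((IsUnifLocDoublingMeasure.vitaliFamily volume 1).ae_tendsto_lintegral_enorm_sub_div hg)]
    with x hxQ hx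
  set r : ℕ → ℝ := fun j => (Q.dyadicCube j x).side * (Real.sqrt d + 1)
  have hr_pos : ∀ j, 0 < r j := fun j => mul_pos (Q.dyadicCube j x).side_pos (by positivity)
  have hr : Tendsto r atTop (𝓝[>] 0) := by
    refine tendsto_nhdsWithin_iff.2 ⟨?_, Eventually.of_forall hr_pos⟩
    have hside : Tendsto (fun j => (Q.dyadicCube j x).side) atTop (𝓝 0) :=
      tendsto_const_nhds.div_atTop (tendsto_pow_atTop_atTop_of_one_lt one_lt_two)
    simpa using hside.mul_const (Real.sqrt d + 1)
  have hball := hx.comp (IsUnifLocDoublingMeasure.tendsto_closedBall_filterAt volume (fun _ => x)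
    r hr (Eventually.of_forall fun j => mem_closedBall_self (by simpa using (hr_pos j).le)))
  have hbound : ∀ j, ((Q.dyadicCube j x).elavg fun y => ENNReal.ofReal |f y - f x|) ≤
      ENNReal.ofReal ((Real.sqrt d + 1) ^ d) * volume (ball (0 : Euc d) 1) *
        ((∫⁻ y in closedBall x (r j), ‖g y - g x‖ₑ) / volume (closedBall x (r j))) := by
    intro j
    have hcongr : ((Q.dyadicCube j x).elavg fun y => ENNReal.ofReal |f y - f x|) =
        (Q.dyadicCube j x).elavg fun y => ‖g y - g x‖ₑ := by
      simp only [elavg]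
      congr 1
      refine setLIntegral_congr_fun (Q.dyadicCube j x).measurableSet_toSet fun y hy => ?_
      simp [g, indicator_of_mem (dyadicCube_subset hxQ j hy), indicator_of_mem hxQ,
        Real.enorm_eq_ofReal_abs]
    exact hcongr ▸ elavg_le_mul_lintegral_closedBall_div (mem_dyadicCube hxQ j) _
  refine tendsto_of_tendsto_of_tendsto_of_le_of_le tendsto_const_nhds ?_ (fun _ => zero_le) hbound
  simpa using ENNReal.Tendsto.const_mul hball
    (Or.inr (ENNReal.mul_ne_top ENNReal.ofReal_ne_top measure_ball_lt_top.ne))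

end dyadicCube

end Cube
/-- Dyadic domination of the oscillation: for `f ∈ L¹(Q)` and
a.e. `x ∈ Q`, `|f(x) - ⟨f⟩_Q| ≤ 2^d ∑_{R ∈ 𝒟(Q)} ⟨|f - ⟨f⟩_R|⟩_R 1_R(x)`. -/
theorem dyadic_domination (d : ℕ) (Q : Cube d) (f : Euc d → ℝ)
    (hf : IntegrableOn f Q.toSet) :
    ∀ᵐ x ∂(volume.restrict Q.toSet),
      ENNReal.ofReal |f x - Q.avg f| ≤
        2 ^ d * ∑' j : ℕ, ∑ k : Fin d → Fin (2 ^ j),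
          (fun R : Cube d =>
              R.elavg (fun y => ENNReal.ofReal |f y - R.avg f|) *
                R.toSet.indicator (fun _ => (1 : ℝ≥0∞)) x)
            (Q.dyadicSub j fun i => (k i : ℕ)) := by
  filter_upwards [ae_restrict_mem Q.measurableSet_toSet, Cube.tendsto_elavg_dyadicCube hf]
    with x hxQ hlim
  have hdom : ∀ N, ENNReal.ofReal |f x - Q.avg f| ≤
      ((Q.dyadicCube N x).elavg fun y => ENNReal.ofReal |f y - f x|) +
        2 ^ d * ∑' j, (Q.dyadicCube j x).meanOsc f := fun N =>
    calc ENNReal.ofReal |f x - Q.avg f|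
        ≤ ENNReal.ofReal |f x - (Q.dyadicCube N x).avg f| +
            ENNReal.ofReal |(Q.dyadicCube N x).avg f - Q.avg f| :=
          (ENNReal.ofReal_le_ofReal (abs_sub_le _ _ _)).trans ENNReal.ofReal_add_le
      _ ≤ _ := by
          rw [abs_sub_comm (f x)]
          exact add_le_add
            (Cube.ofReal_abs_avg_sub_le_elavg (hf.mono_set (Cube.dyadicCube_subset hxQ N)) _)
            ((Cube.ofReal_abs_avg_dyadicCube_sub_avg_le hf hxQ N).trans
              (by gcongr; exact ENNReal.sum_le_tsum _))
  calc ENNReal.ofReal |f x - Q.avg f| ≤ 2 ^ d * ∑' j, (Q.dyadicCube j x).meanOsc f :=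
        ge_of_tendsto (by simpa using hlim.add_const _) (Eventually.of_forall hdom)
    _ ≤ _ := by gcongr with j; exact Cube.meanOsc_dyadicCube_le_sum hxQ j
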